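/- arXiv:math/0701498 — 4 statements merged into one kernel-verified Lean document; each statement's English description precedes it below -/
import Mathlib

section
/- Let p be a prime, let G be a group with subgroups A and B, let φ : A → B be an isomorphism, and let G* = (G, t; t⁻¹At = B, φ) be the corresponding HNN-extension. If G* is residually a finite p-group then the family 𝓕_G^p(A,B,φ) of all (A,B,φ,p)-compatible subgroups of G is a filtration, i.e. the intersection of all its members is the identity subgroup. -/
/-- A group `X` is *residually a finite p-group* if every non-identity element is excluded
by some normal subgroup of `p`-power index (equivalently, survives in some finite `p`-group
quotient). -/
def ResiduallyPGroup (p : ℕ) (X : Type*) [Group X] : Prop :=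
  ∀ x : X, x ≠ 1 → ∃ N : Subgroup X, N.Normal ∧ x ∉ N ∧ ∃ k : ℕ, N.index = p ^ k

/-- A subgroup `H` of `G` is `(A,B,φ)`-compatible if `φ(A ∩ H) = B ∩ H`. -/
def Compatible {G : Type*} [Group G] {A B : Subgroup G} (φ : A ≃* B) (H : Subgroup G) : Prop :=
  (H.subgroupOf A).map φ.toMonoidHom = H.subgroupOf B

/-- A subgroup `H` of `G` is `(A,B,φ,p)`-compatible if there is a chain
`H = G₀ ≤ G₁ ≤ ⋯ ≤ Gₙ = G` of normal `(A,B,φ)`-compatible subgroups of `G` in which every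
quotient `Gᵢ₊₁/Gᵢ` has order `p` and `φ(a) ≡ a (mod Gᵢ)` for every `a ∈ A ∩ Gᵢ₊₁`. -/
def PCompatible (p : ℕ) {G : Type*} [Group G] {A B : Subgroup G} (φ : A ≃* B)
    (H : Subgroup G) : Prop :=
  ∃ (n : ℕ) (Gs : Fin (n + 1) → Subgroup G),
    Gs 0 = H ∧ Gs (Fin.last n) = ⊤ ∧ Monotone Gs ∧
    (∀ i, (Gs i).Normal ∧ Compatible φ (Gs i)) ∧
    (∀ i : Fin n, (Gs i.castSucc).relIndex (Gs i.succ) = p ∧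
      ∀ a : A, (a : G) ∈ Gs i.succ → (φ a : G) * (a : G)⁻¹ ∈ Gs i.castSucc)

/-!
A normal subgroup `N` of `p`-power index in `G*` sits at the bottom of a chain
`N = N₀ ≤ ⋯ ≤ N_k = G*` of normal subgroups with factors of order `p`, each central modulo the
previous one: lift a central subgroup of order `p` of the `p`-group `G*/N` and recurse.
Pulled back to `G`, the terms stay normal and become `(A,B,φ)`-compatible because `φ(a) = t a t⁻¹`
in `G*`; consecutive factors have order `1` or `p`, and `φ(a) a⁻¹ = [t, a]` lies in the previous
term by centrality. Dropping repeated terms shows that `G ∩ N` is `(A,B,φ,p)`-compatible, and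
these subgroups separate the elements of `G` because `G*` is residually a finite `p`-group.
-/

open scoped commutatorElement

namespace Subgroup

variable {X : Type*} [Group X]

theorem normal_of_commutator_le {N M : Subgroup X} (hNM : N ≤ M) (h : ⁅(⊤ : Subgroup X), M⁆ ≤ N) :
    M.Normal := by
  refine ⟨fun x hx g => ?_⟩
  have hcomm : ⁅g, x⁆ ∈ N := h (commutator_mem_commutator (mem_top g) hx)
  simpa [commutatorElement_def] using mul_mem (hNM hcomm) hx

theorem relIndex_dvd_of_le_right {H K L : Subgroup X} [H.Normal] (hKL : K ≤ L) :
    H.relIndex K ∣ H.relIndex L := by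
  rw [← relIndex_sup_right K H, ← relIndex_sup_right L H]
  exact dvd_of_mul_right_eq _
    (relIndex_mul_relIndex H (K ⊔ H) (L ⊔ H) le_sup_right (sup_le_sup_right hKL H))

theorem relIndex_comap_dvd {G : Type*} [Group G] (f : G →* X) {H K : Subgroup X} [H.Normal] :
    (H.comap f).relIndex (K.comap f) ∣ H.relIndex K := by
  rw [relIndex_comap]
  exact relIndex_dvd_of_le_right (map_comap_le f K)

theorem relIndex_comap_mk (N : Subgroup X) [N.Normal] (Z : Subgroup (X ⧸ N)) :
    N.relIndex (Z.comap (QuotientGroup.mk' N)) = Nat.card Z := by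
  calc N.relIndex (Z.comap (QuotientGroup.mk' N))
      = ((⊥ : Subgroup (X ⧸ N)).comap (QuotientGroup.mk' N)).relIndex
          (Z.comap (QuotientGroup.mk' N)) := by
        rw [MonoidHom.comap_bot, QuotientGroup.ker_mk']
    _ = Nat.card Z := by
        rw [relIndex_comap, map_comap_eq_self_of_surjective (QuotientGroup.mk'_surjective N),
          relIndex_bot_left]

theorem commutator_top_comap_mk_le (N : Subgroup X) [N.Normal] {Z : Subgroup (X ⧸ N)}
    (hZ : Z ≤ center (X ⧸ N)) : ⁅(⊤ : Subgroup X), Z.comap (QuotientGroup.mk' N)⁆ ≤ N := by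
  rw [commutator_le]
  intro g _ x hx
  rw [← QuotientGroup.eq_one_iff, ← QuotientGroup.mk'_apply, map_commutatorElement,
    commutatorElement_eq_one_iff_mul_comm]
  exact mem_center_iff.mp (hZ hx) _

end Subgroup

theorem exists_central_subgroup_card_eq_prime {p : ℕ} [Fact p.Prime] {Q : Type*} [Group Q] {n : ℕ}
    (hQ : Nat.card Q = p ^ (n + 1)) : ∃ Z : Subgroup Q, Z ≤ Subgroup.center Q ∧ Nat.card Z = p := by
  obtain ⟨m, hm, hcenter⟩ := IsPGroup.card_center_eq_prime_pow hQ n.succ_pos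
  have : Finite Q := Nat.finite_of_card_ne_zero (hQ ▸ pow_ne_zero _ (NeZero.ne p))
  obtain ⟨z, hz⟩ := exists_prime_orderOf_dvd_card' p (hcenter ▸ dvd_pow_self p hm.ne')
  refine ⟨Subgroup.zpowers (z : Q), Subgroup.zpowers_le.mpr z.2, ?_⟩
  rw [Nat.card_zpowers, Subgroup.orderOf_coe, hz]

section CentralSeries

variable {X : Type*} [Group X] {p : ℕ}

structure IsCentralPSeries (p : ℕ) (k : ℕ) (Ns : ℕ → Subgroup X) : Prop where
  mono : Monotone Ns
  eq_top : Ns k = ⊤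
  normal : ∀ i, (Ns i).Normal
  relIndex_eq : ∀ i < k, (Ns i).relIndex (Ns (i + 1)) = p
  commutator_le : ∀ i < k, ⁅(⊤ : Subgroup X), Ns (i + 1)⁆ ≤ Ns i

theorem Subgroup.exists_central_relIndex_eq_prime [Fact p.Prime] (N : Subgroup X) [N.Normal]
    {n : ℕ} (hN : N.index = p ^ (n + 1)) :
    ∃ M : Subgroup X, N ≤ M ∧ M.Normal ∧ N.relIndex M = p ∧ M.index = p ^ n ∧
      ⁅(⊤ : Subgroup X), M⁆ ≤ N := by
  obtain ⟨Z, hZ, hZcard⟩ := exists_central_subgroup_card_eq_prime (hN ▸ N.index_eq_card.symm)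
  set M := Z.comap (QuotientGroup.mk' N)
  have hNM : N ≤ M := QuotientGroup.ker_mk' N ▸ MonoidHom.ker_le_comap _ Z
  have hrel : N.relIndex M = p := (N.relIndex_comap_mk Z).trans hZcard
  have hcomm : ⁅(⊤ : Subgroup X), M⁆ ≤ N := N.commutator_top_comap_mk_le hZ
  refine ⟨M, hNM, Subgroup.normal_of_commutator_le hNM hcomm, hrel, ?_, hcomm⟩
  have hmul := Subgroup.relIndex_mul_index hNM
  rw [hrel, hN, pow_succ'] at hmul
  exact Nat.eq_of_mul_eq_mul_left (Fact.out : p.Prime).pos hmul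

theorem exists_isCentralPSeries [Fact p.Prime] (k : ℕ) (N : Subgroup X) [N.Normal]
    (hN : N.index = p ^ k) : ∃ Ns, IsCentralPSeries p k Ns ∧ Ns 0 = N := by
  induction k generalizing N with
  | zero =>
    refine ⟨fun _ => ⊤, ⟨monotone_const, rfl, fun _ => inferInstance, by simp, by simp⟩, ?_⟩
    exact (Subgroup.index_eq_one.mp (by simpa using hN)).symm
  | succ k ih =>
    obtain ⟨M, hNM, hM, hrel, hMindex, hcomm⟩ := N.exists_central_relIndex_eq_prime hN
    obtain ⟨Ns, hs, rfl⟩ := ih M hMindex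
    refine ⟨fun | 0 => N | i + 1 => Ns i, ⟨?_, hs.eq_top, ?_, ?_, ?_⟩, rfl⟩
    · exact monotone_nat_of_le_succ fun | 0 => hNM | i + 1 => hs.mono i.le_succ
    · exact fun | 0 => inferInstance | i + 1 => hs.normal i
    · exact fun | 0, _ => hrel | i + 1, hi => hs.relIndex_eq i (by omega)
    · exact fun | 0, _ => hcomm | i + 1, hi => hs.commutator_le i (by omega)

end CentralSeries

section Compatible

variable {G : Type*} [Group G] {A B : Subgroup G} {φ : A ≃* B} {p : ℕ}

theorem compatible_of_forall_mem_iff {H : Subgroup G} (h : ∀ a : A, (a : G) ∈ H ↔ (φ a : G) ∈ H) :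
    Compatible φ H := by
  ext b
  simp only [Subgroup.mem_map, Subgroup.mem_subgroupOf, MulEquiv.coe_toMonoidHom]
  constructor
  · rintro ⟨a, ha, rfl⟩
    exact (h a).mp ha
  · intro hb
    exact ⟨φ.symm b, (h _).mpr (by rwa [φ.apply_symm_apply]), φ.apply_symm_apply b⟩

theorem compatible_top : Compatible φ ⊤ := by
  rw [Compatible, Subgroup.top_subgroupOf, Subgroup.top_subgroupOf]
  exact Subgroup.map_top_of_surjective _ φ.surjective

theorem pCompatible_top : PCompatible p φ ⊤ :=
  ⟨0, fun _ => ⊤, rfl, rfl, monotone_const, fun _ => ⟨inferInstance, compatible_top⟩, Fin.elim0⟩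

theorem PCompatible.cons {H K : Subgroup G} (hK : PCompatible p φ K) (hHK : H ≤ K)
    (hH : H.Normal) (hHc : Compatible φ H) (hrel : H.relIndex K = p)
    (hcong : ∀ a : A, (a : G) ∈ K → (φ a : G) * (a : G)⁻¹ ∈ H) : PCompatible p φ H := by
  obtain ⟨n, Gs, rfl, hlast, hmono, hnc, hstep⟩ := hK
  refine ⟨n + 1, Fin.cons H Gs, rfl, by rwa [← Fin.succ_last, Fin.cons_succ], ?_, ?_, ?_⟩
  · refine Fin.monotone_iff_le_succ.mpr (Fin.cases hHK fun j => ?_)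
    rw [← Fin.succ_castSucc, Fin.cons_succ, Fin.cons_succ]
    exact hmono (Fin.castSucc_le_succ j)
  · exact Fin.cases ⟨hH, hHc⟩ hnc
  · refine Fin.cases ⟨hrel, hcong⟩ fun j => ?_
    rw [← Fin.succ_castSucc, Fin.cons_succ, Fin.cons_succ]
    exact hstep j

end Compatible

namespace HNNExtension

variable {G : Type*} [Group G] {A B : Subgroup G} {φ : A ≃* B} {p : ℕ}

theorem of_mul_inv_eq_commutator (a : A) :
    (of ((φ a : G) * (a : G)⁻¹) : HNNExtension G A B φ) =
      ⁅(t : HNNExtension G A B φ), of (a : G)⁆ := by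
  rw [map_mul, map_inv, equiv_eq_conj, commutatorElement_def]

theorem compatible_comap_of (N : Subgroup (HNNExtension G A B φ)) [hN : N.Normal] :
    Compatible φ (N.comap of) := by
  refine compatible_of_forall_mem_iff fun a => ?_
  rw [Subgroup.mem_comap, Subgroup.mem_comap, equiv_eq_conj]
  exact ⟨fun ha => hN.conj_mem _ ha t, fun ha => by simpa [mul_assoc] using hN.conj_mem _ ha t⁻¹⟩

theorem pCompatible_comap_of (hp : p.Prime) {k : ℕ} {Ns : ℕ → Subgroup (HNNExtension G A B φ)}
    (hs : IsCentralPSeries p k Ns) {i : ℕ} (hi : i ≤ k) : PCompatible p φ ((Ns i).comap of) := by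
  induction hi using Nat.decreasingInduction with
  | self => rw [hs.eq_top, Subgroup.comap_top]; exact pCompatible_top
  | of_succ i hik ih =>
    have hNs := hs.normal i
    have hle : (Ns i).comap of ≤ (Ns (i + 1)).comap of := Subgroup.comap_mono (hs.mono i.le_succ)
    have hdvd : ((Ns i).comap of).relIndex ((Ns (i + 1)).comap of) ∣ p :=
      hs.relIndex_eq i hik ▸ Subgroup.relIndex_comap_dvd of
    rcases hp.eq_one_or_self_of_dvd _ hdvd with hone | hrel
    · rwa [le_antisymm hle (Subgroup.relIndex_eq_one.mp hone)]
    refine ih.cons hle (hNs.comap _) (compatible_comap_of _) hrel fun a ha => ?_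
    rw [Subgroup.mem_comap, of_mul_inv_eq_commutator]
    exact hs.commutator_le i hik (Subgroup.commutator_mem_commutator (Subgroup.mem_top t) ha)

end HNNExtension

/-- **Theorem 2 (1).** If the HNN-extension `G* = (G, t; t⁻¹At = B, φ)` is residually a
finite `p`-group, then the family `𝓕_G^p(A,B,φ)` of all `(A,B,φ,p)`-compatible subgroups of
`G` is a filtration, i.e. the intersection of all its members is the identity subgroup. -/
theorem pCompatible_family_filtration_of_residually_p
    (p : ℕ) (hp : p.Prime) (G : Type*) [Group G] (A B : Subgroup G) (φ : A ≃* B)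
    (h : ResiduallyPGroup p (HNNExtension G A B φ)) :
    sInf {H : Subgroup G | PCompatible p φ H} = ⊥ := by
  have : Fact p.Prime := ⟨hp⟩
  refine (Subgroup.eq_bot_iff_forall _).mpr fun x hx => ?_
  by_contra hx1
  obtain ⟨N, hN, hxN, k, hk⟩ :=
    h (HNNExtension.of x) ((map_ne_one_iff _ (HNNExtension.of_injective (φ := φ))).mpr hx1)
  obtain ⟨Ns, hs, rfl⟩ := exists_isCentralPSeries k N hk
  exact hxN (Subgroup.mem_sInf.mp hx _ (HNNExtension.pCompatible_comap_of hp hs k.zero_le))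
end

section
/- Let p be a prime, let G be a group with subgroups A and B, and let φ : A → B be an isomorphism. If H and K are (A,B,φ,p)-compatible subgroups of G, then H ∩ K is an (A,B,φ,p)-compatible subgroup of G; consequently the family 𝓕_G^p(A,B,φ) of all (A,B,φ,p)-compatible subgroups of G is closed under intersections of finite collections of subgroups. -/
/-
Intersecting a chain `K = K₀ ≤ ⋯ ≤ Kₙ = G` witnessing the `p`-compatibility of `K` with a
normal compatible subgroup `H` gives a chain from `H ∩ K` to `H` whose links either collapse or
are again links of index `p`: since `Kᵢ` is normal, `(H ∩ Kᵢ₊₁)/(H ∩ Kᵢ)` embeds in `Kᵢ₊₁/Kᵢ`, so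
its order divides the prime `p`. Appending a chain witnessing the `p`-compatibility of `H`
finishes the argument, and finite intersections follow by induction since `G` itself is
`p`-compatible.
-/

namespace Subgroup

variable {G : Type*} [Group G]

theorem relIndex_inf_dvd_relIndex (N : Subgroup G) {L M : Subgroup G} [L.Normal] (hLM : L ≤ M) :
    (N ⊓ L).relIndex (N ⊓ M) ∣ L.relIndex M := by
  have hNL : N ⊓ L = N ⊓ M ⊓ L := by rw [inf_assoc, inf_eq_right.mpr hLM]
  rw [hNL, inf_relIndex_left, ← relIndex_sup_right]
  exact Dvd.intro _ (relIndex_mul_relIndex _ _ M le_sup_right (sup_le inf_le_right hLM))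

end Subgroup

open Relation

section

variable {G : Type*} [Group G] {A B : Subgroup G} {φ : A ≃* B} {p : ℕ}

theorem compatible_top_s10 (φ : A ≃* B) : Compatible φ (⊤ : Subgroup G) := by
  rw [Compatible, Subgroup.top_subgroupOf, Subgroup.top_subgroupOf]
  exact Subgroup.map_top_of_surjective _ φ.surjective

namespace Compatible

variable {H K : Subgroup G}

theorem inf (hH : Compatible φ H) (hK : Compatible φ K) : Compatible φ (H ⊓ K) := by
  unfold Compatible Subgroup.subgroupOf at *
  rw [Subgroup.comap_inf, Subgroup.comap_inf, Subgroup.map_inf _ _ _ φ.injective, hH, hK]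

theorem apply_mem (hH : Compatible φ H) {a : A} (ha : (a : G) ∈ H) : (φ a : G) ∈ H := by
  have h : φ a ∈ (H.subgroupOf A).map φ.toMonoidHom := ⟨a, Subgroup.mem_subgroupOf.2 ha, rfl⟩
  rw [hH] at h
  exact Subgroup.mem_subgroupOf.1 h

end Compatible

structure PCompatibleStep (p : ℕ) (φ : A ≃* B) (L M : Subgroup G) : Prop where
  normal_lower : L.Normal
  compatible_lower : Compatible φ L
  normal_upper : M.Normal
  compatible_upper : Compatible φ M
  le : L ≤ M
  relIndex_eq : L.relIndex M = p
  mul_inv_mem : ∀ a : A, (a : G) ∈ M → (φ a : G) * (a : G)⁻¹ ∈ L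

theorem pCompatible_top_s10 (φ : A ≃* B) : PCompatible p φ (⊤ : Subgroup G) :=
  ⟨0, fun _ => ⊤, rfl, rfl, monotone_const,
    fun _ => ⟨inferInstance, compatible_top_s10 φ⟩, fun i => i.elim0⟩

theorem PCompatible.normal {H : Subgroup G} (h : PCompatible p φ H) : H.Normal := by
  obtain ⟨_, _, rfl, -, -, hGs, -⟩ := h
  exact (hGs 0).1

theorem PCompatible.compatible {H : Subgroup G} (h : PCompatible p φ H) : Compatible φ H := by
  obtain ⟨_, _, rfl, -, -, hGs, -⟩ := h
  exact (hGs 0).2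

theorem PCompatible.of_step {L M : Subgroup G} (h : PCompatibleStep p φ L M)
    (hM : PCompatible p φ M) : PCompatible p φ L := by
  obtain ⟨n, Gs, h0, hlast, hmono, hGs, hlinks⟩ := hM
  refine ⟨n + 1, Fin.cons L Gs, rfl, by rw [← Fin.succ_last, Fin.cons_succ, hlast], ?_, ?_, ?_⟩
  · refine Fin.monotone_iff_le_succ.2 fun i => ?_
    induction i using Fin.cases with
    | zero => simpa [h0] using h.le
    | succ j =>
      rw [← Fin.succ_castSucc, Fin.cons_succ, Fin.cons_succ]
      exact hmono (Fin.castSucc_le_succ j)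
  · intro i
    induction i using Fin.cases with
    | zero => exact ⟨h.normal_lower, h.compatible_lower⟩
    | succ j => rw [Fin.cons_succ]; exact hGs j
  · intro i
    induction i using Fin.cases with
    | zero =>
      simp only [Fin.castSucc_zero, Fin.cons_zero, Fin.cons_succ, h0]
      exact ⟨h.relIndex_eq, h.mul_inv_mem⟩
    | succ j =>
      rw [← Fin.succ_castSucc, Fin.cons_succ, Fin.cons_succ]
      exact hlinks j

theorem PCompatible.reflTransGen_top {H : Subgroup G} (h : PCompatible p φ H) :
    ReflTransGen (PCompatibleStep p φ) H ⊤ := by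
  obtain ⟨n, Gs, rfl, hlast, hmono, hGs, hlinks⟩ := h
  suffices ∀ j, ReflTransGen (PCompatibleStep p φ) (Gs j) ⊤ from this 0
  intro j
  induction j using Fin.reverseInduction with
  | last => rw [hlast]
  | cast i ih =>
    exact .head ⟨(hGs _).1, (hGs _).2, (hGs _).1, (hGs _).2, hmono (Fin.castSucc_le_succ i),
      (hlinks i).1, (hlinks i).2⟩ ih

theorem pCompatible_iff_reflTransGen {H : Subgroup G} :
    PCompatible p φ H ↔ ReflTransGen (PCompatibleStep p φ) H ⊤ := by
  refine ⟨PCompatible.reflTransGen_top, fun h => ?_⟩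
  induction h using ReflTransGen.head_induction_on with
  | refl => exact pCompatible_top_s10 φ
  | head hstep _ ih => exact ih.of_step hstep

theorem PCompatibleStep.inf_left_eq_or {N L M : Subgroup G} (hp : p.Prime) [N.Normal]
    (hN : Compatible φ N) (h : PCompatibleStep p φ L M) :
    N ⊓ L = N ⊓ M ∨ PCompatibleStep p φ (N ⊓ L) (N ⊓ M) := by
  have := h.normal_lower
  have := h.normal_upper
  have hdvd := N.relIndex_inf_dvd_relIndex h.le
  rw [h.relIndex_eq] at hdvd
  rcases hp.eq_one_or_self_of_dvd _ hdvd with hone | hindex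
  · exact .inl (le_antisymm (inf_le_inf_left N h.le) (Subgroup.relIndex_eq_one.mp hone))
  · refine .inr ⟨inferInstance, hN.inf h.compatible_lower, inferInstance,
      hN.inf h.compatible_upper, inf_le_inf_left N h.le, hindex, fun a ha => ?_⟩
    obtain ⟨haN, haM⟩ := Subgroup.mem_inf.mp ha
    exact Subgroup.mem_inf.mpr ⟨mul_mem (hN.apply_mem haN) (inv_mem haN), h.mul_inv_mem a haM⟩

theorem reflTransGen_pCompatibleStep_inf_left {N L M : Subgroup G} (hp : p.Prime) [N.Normal]
    (hN : Compatible φ N) (h : ReflTransGen (PCompatibleStep p φ) L M) :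
    ReflTransGen (PCompatibleStep p φ) (N ⊓ L) (N ⊓ M) := by
  induction h with
  | refl => exact .refl
  | tail _ hstep ih =>
    rcases hstep.inf_left_eq_or hp hN with heq | hstep'
    · rwa [← heq]
    · exact ih.tail hstep'

theorem PCompatible.inf (hp : p.Prime) {H K : Subgroup G} (hH : PCompatible p φ H)
    (hK : PCompatible p φ K) : PCompatible p φ (H ⊓ K) := by
  have := hH.normal
  have hHK := reflTransGen_pCompatibleStep_inf_left hp hH.compatible hK.reflTransGen_top
  rw [inf_top_eq] at hHK
  exact pCompatible_iff_reflTransGen.2 (hHK.trans hH.reflTransGen_top)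

end

/-- **Lemma 2.2 (c).** If `H` and `K` are `(A,B,φ,p)`-compatible subgroups of `G` then so is
`H ∩ K`; consequently, the family `𝓕_G^p(A,B,φ)` of all `(A,B,φ,p)`-compatible subgroups of
`G` is closed under intersections of finite collections of subgroups. -/
theorem pCompatible_inf
    (p : ℕ) (hp : p.Prime) (G : Type*) [Group G] (A B : Subgroup G) (φ : A ≃* B)
    (H K : Subgroup G) (hH : PCompatible p φ H) (hK : PCompatible p φ K) :
    PCompatible p φ (H ⊓ K) ∧
      ∀ (ι : Type) (s : Finset ι) (f : ι → Subgroup G), s.Nonempty →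
        (∀ i ∈ s, PCompatible p φ (f i)) → PCompatible p φ (s.inf f) :=
  ⟨hH.inf hp hK, fun _ _ _ _ hf =>
    Finset.inf_induction (pCompatible_top_s10 φ) (fun _ h₁ _ h₂ => h₁.inf hp h₂) hf⟩
end

section
/- Let p be a prime, let r ≥ 0 and s ≥ 0 be integers, let ε = ±1 (with p = 2 and s ≤ r in case ε = −1), and consider the group G = ⟨a, b; b⁻¹a^{p^r}b = a^{ε p^r}⟩ with A and B the cyclic subgroups generated by a and b respectively. Then for every integer n > s there exists a normal subgroup N of G of finite p-power index such that A ∩ N = A^{p^n}, B ∩ N = B^{p^{n−s}}, and a^{p^{n−1}} ≡ b^{p^{n−s−1}} (mod N). -/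
/-- The single relator `b⁻¹aˡb·a⁻ᵐ` of the Baumslag–Solitar group `G(l,m)`,
with `a = FreeGroup.of 0` and `b = FreeGroup.of 1`. -/
def bsRels (l m : ℤ) : Set (FreeGroup (Fin 2)) :=
  {(FreeGroup.of 1)⁻¹ * (FreeGroup.of 0) ^ l * FreeGroup.of 1 * ((FreeGroup.of 0) ^ m)⁻¹}

/-- The Baumslag–Solitar group `G(l,m) = ⟨a, b; b⁻¹aˡb = aᵐ⟩`. -/
def BS (l m : ℤ) : Type := PresentedGroup (bsRels l m)

instance (l m : ℤ) : Group (BS l m) := by delta BS; infer_instance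

/-- The generator `a` of `BS l m`. -/
def BS.a (l m : ℤ) : BS l m := PresentedGroup.of (0 : Fin 2)

/-- The generator `b` of `BS l m`. -/
def BS.b (l m : ℤ) : BS l m := PresentedGroup.of (1 : Fin 2)

/-!
The subgroup `N` is the kernel of a homomorphism `G → H` to a finite `p`-group sending `a` to an
element `α` of order `pⁿ` and `b` to an element `β` with `α ^ p ^ (n - 1) = β ^ p ^ (n - s - 1)`;
then `β` has order `p ^ (n - s)`, and these two orders cut out `A ∩ N` and `B ∩ N`.

If `pⁿ ∣ pʳ - ε pʳ` (always when `ε = 1`; when `ε = -1` and `n = s + 1`, because `s ≤ r`),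
take `H = ℤ/pⁿ`, `α = 1`, `β = pˢ`. Otherwise `p = 2`, `n ≥ s + 2`, and `H` is the affine group
of `ℤ/2ᴹ`, `M = 2n - s - 1`, with `α : x ↦ x + 2^(n-s-1)` and `β : x ↦ (2ⁿ - 1) x + 1`.
Since `2ⁿ - 1 ≡ -1 (mod 2ⁿ)`, `β` inverts `α`; since `2^(2n) = 0`, the powers of
`β² : x ↦ (1 - 2^(n+1)) x + 2ⁿ` are linear in the exponent, giving
`β ^ 2^(n-s-1) : x ↦ x + 2^(M-1)`.
-/

open Subgroup Multiplicative

theorem MonoidHom.zpowers_inf_ker {G H : Type*} [Group G] [Group H] (f : G →* H) (g : G) :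
    zpowers g ⊓ f.ker = zpowers (g ^ orderOf (f g)) := by
  ext x
  simp only [mem_inf, mem_zpowers_iff, MonoidHom.mem_ker]
  constructor
  · rintro ⟨⟨t, rfl⟩, ht⟩
    obtain ⟨e, rfl⟩ := orderOf_dvd_iff_zpow_eq_one.mpr (by rwa [map_zpow] at ht)
    exact ⟨e, by rw [← zpow_natCast, ← zpow_mul]⟩
  · rintro ⟨e, rfl⟩
    refine ⟨⟨orderOf (f g) * e, by rw [zpow_mul, zpow_natCast]⟩, ?_⟩
    rw [map_zpow, map_pow, pow_orderOf_eq_one, one_zpow]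

theorem MonoidHom.exists_index_ker_eq_pow {G H : Type*} [Group G] [Group H] {p K : ℕ}
    (hp : p.Prime) (hH : Nat.card H = p ^ K) (f : G →* H) : ∃ k, f.ker.index = p ^ k := by
  obtain ⟨k, -, hk⟩ := (Nat.dvd_prime_pow hp).mp
    (hH ▸ Dvd.intro_left _ f.range.index_mul_card)
  exact ⟨k, (index_ker f).trans hk⟩

theorem orderOf_eq_prime_pow_of_pow_eq {G : Type*} [Monoid G] {p : ℕ} [Fact p.Prime] {x y : G}
    {i j : ℕ} (hx : orderOf x = p ^ (i + 1)) (h : x ^ p ^ i = y ^ p ^ j) :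
    orderOf y = p ^ (j + 1) := by
  refine orderOf_eq_prime_pow ?_ ?_
  · have hp : p.Prime := Fact.out
    rw [← h]
    exact pow_ne_one_of_lt_orderOf (pow_pos hp.pos i).ne'
      (hx ▸ Nat.pow_lt_pow_right hp.one_lt i.lt_succ_self)
  · rw [pow_succ, pow_mul, ← h, ← pow_mul, ← pow_succ, ← hx, pow_orderOf_eq_one]

theorem ZMod.addOrderOf_cast_pow {p : ℕ} (hp : 0 < p) {k n : ℕ} (hkn : k ≤ n) :
    addOrderOf ((p : ZMod (p ^ n)) ^ k) = p ^ (n - k) := by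
  rw [← Nat.cast_pow, ZMod.addOrderOf_coe _ (pow_pos hp n).ne',
    Nat.gcd_eq_right (pow_dvd_pow p hkn), Nat.pow_div hkn hp]

theorem ZMod.two_pow_eq_zero {M i : ℕ} (h : M ≤ i) : (2 : ZMod (2 ^ M)) ^ i = 0 := by
  exact_mod_cast (ZMod.natCast_eq_zero_iff _ _).2 (pow_dvd_pow 2 h)

theorem Nat.card_multiplicative_zmod (q : ℕ) : Nat.card (Multiplicative (ZMod q)) = q :=
  (Nat.card_congr toAdd).trans (Nat.card_zmod q)

namespace BS

variable {l m : ℤ} {p n s : ℕ} {H : Type*} [Group H]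

theorem lift_rel_eq_one {α β : H} (h : α ^ l * β = β * α ^ m) :
    ∀ r ∈ bsRels l m, FreeGroup.lift ![α, β] r = 1 := by
  rintro _ rfl
  simp only [map_mul, map_inv, map_zpow, FreeGroup.lift_apply_of, Matrix.cons_val_zero,
    Matrix.cons_val_one]
  rw [mul_assoc β⁻¹, h]
  group

def lift (α β : H) (h : α ^ l * β = β * α ^ m) : BS l m →* H :=
  PresentedGroup.toGroup (lift_rel_eq_one h)

@[simp]
theorem lift_a {α β : H} (h : α ^ l * β = β * α ^ m) : lift α β h (a l m) = α :=
  PresentedGroup.toGroup.of _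

@[simp]
theorem lift_b {α β : H} (h : α ^ l * β = β * α ^ m) : lift α β h (b l m) = β :=
  PresentedGroup.toGroup.of _

structure ControlledPair (l m : ℤ) (p n s : ℕ) (α β : H) : Prop where
  rel : α ^ l * β = β * α ^ m
  orderOf_fst : orderOf α = p ^ n
  pow_fst_eq_pow_snd : α ^ p ^ (n - 1) = β ^ p ^ (n - s - 1)

theorem ControlledPair.orderOf_snd {α β : H} (h : ControlledPair l m p n s α β) (hp : p.Prime)
    (hn : s < n) : orderOf β = p ^ (n - s) := by
  have := Fact.mk hp
  have hα : orderOf α = p ^ (n - 1 + 1) := by rw [Nat.sub_add_cancel (by omega), h.orderOf_fst]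
  rw [show n - s = n - s - 1 + 1 by omega]
  exact orderOf_eq_prime_pow_of_pow_eq hα h.pow_fst_eq_pow_snd

theorem ControlledPair.exists_normal {α β : H} (h : ControlledPair l m p n s α β) (hp : p.Prime)
    (hn : s < n) {K : ℕ} (hH : Nat.card H = p ^ K) :
    ∃ N : Subgroup (BS l m), N.Normal ∧ (∃ k : ℕ, N.index = p ^ k) ∧
      zpowers (a l m) ⊓ N = zpowers (a l m ^ p ^ n) ∧
      zpowers (b l m) ⊓ N = zpowers (b l m ^ p ^ (n - s)) ∧
      a l m ^ p ^ (n - 1) * (b l m ^ p ^ (n - s - 1))⁻¹ ∈ N := by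
  set f := lift α β h.rel
  refine ⟨f.ker, f.normal_ker, f.exists_index_ker_eq_pow hp hH, ?_, ?_, ?_⟩
  · rw [f.zpowers_inf_ker, lift_a, h.orderOf_fst]
  · rw [f.zpowers_inf_ker, lift_b, h.orderOf_snd hp hn]
  · simp [f, h.pow_fst_eq_pow_snd]

theorem exists_controlledPair_cyclic (hn : s < n) (hlm : (p : ℤ) ^ n ∣ l - m) :
    ∃ α β : Multiplicative (ZMod (p ^ n)), ControlledPair l m p n s α β := by
  refine ⟨ofAdd 1, ofAdd ((p : ZMod (p ^ n)) ^ s), ⟨?_, ?_, ?_⟩⟩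
  · have hlm' : (m : ZMod (p ^ n)) = l :=
      (ZMod.intCast_eq_intCast_iff_dvd_sub _ _ _).2 (by simpa)
    rw [← ofAdd_zsmul, ← ofAdd_zsmul, ← ofAdd_add, ← ofAdd_add, zsmul_eq_mul, zsmul_eq_mul, hlm',
      add_comm]
  · rw [orderOf_ofAdd_eq_addOrderOf, ZMod.addOrderOf_one]
  · rw [← ofAdd_nsmul, ← ofAdd_nsmul, nsmul_eq_mul, nsmul_eq_mul, mul_one]
    push_cast
    rw [← pow_add, show n - s - 1 + s = n - 1 by omega]

end BS

/-- The affine group of `ZMod q`: `⟨ofAdd t, u⟩` is the map `x ↦ u * x + t`. -/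
abbrev AffineZMod (q : ℕ) : Type :=
  Multiplicative (ZMod q) ⋊[(MulAutMultiplicative (ZMod q)).symm.toMonoidHom.comp
    (DistribMulAction.toAddAut (ZMod q)ˣ (ZMod q))] (ZMod q)ˣ

namespace AffineZMod

variable {q : ℕ}

theorem mk_mul_mk (t t' : ZMod q) (u u' : (ZMod q)ˣ) :
    (⟨ofAdd t, u⟩ * ⟨ofAdd t', u'⟩ : AffineZMod q) = ⟨ofAdd (t + u * t'), u * u'⟩ :=
  rfl

theorem card [NeZero q] : Nat.card (AffineZMod q) = q * q.totient := by
  rw [SemidirectProduct.card, Nat.card_eq_fintype_card, Fintype.card_multiplicative, ZMod.card,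
    Nat.card_eq_fintype_card, ZMod.card_units_eq_totient]

theorem card_two_pow {M : ℕ} (hM : 0 < M) : Nat.card (AffineZMod (2 ^ M)) = 2 ^ (2 * M - 1) := by
  rw [card, Nat.totient_prime_pow Nat.prime_two hM, Nat.add_one_sub_one, mul_one, ← pow_add]
  congr 1
  omega

theorem inl_ofAdd_zpow (t : ZMod q) (j : ℤ) :
    (SemidirectProduct.inl (ofAdd t) : AffineZMod q) ^ j = ⟨ofAdd (j * t), 1⟩ := by
  rw [← map_zpow, ← ofAdd_zsmul, zsmul_eq_mul]
  rfl

theorem inl_ofAdd_pow (t : ZMod q) (j : ℕ) :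
    (SemidirectProduct.inl (ofAdd t) : AffineZMod q) ^ j = ⟨ofAdd (j * t), 1⟩ := by
  rw [← map_pow, ← ofAdd_nsmul, nsmul_eq_mul]
  rfl

theorem exists_pow_two_mul {n : ℕ} {u : (ZMod q)ˣ} (hu : (u : ZMod q) = 2 ^ n - 1)
    (h2n : (2 : ZMod q) ^ (2 * n) = 0) (j : ℕ) :
    ∃ w : (ZMod q)ˣ, (w : ZMod q) = 1 - j * 2 ^ (n + 1) ∧
      (⟨ofAdd 1, u⟩ : AffineZMod q) ^ (2 * j) = ⟨ofAdd (j * 2 ^ n), w⟩ := by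
  induction j with
  | zero =>
    refine ⟨1, by simp, ?_⟩
    rw [mul_zero, pow_zero, Nat.cast_zero, zero_mul, ofAdd_zero]
    rfl
  | succ j ih =>
    obtain ⟨w, hw, hpow⟩ := ih
    refine ⟨w * (u * u), ?_, ?_⟩
    · push_cast
      rw [hw, hu]
      linear_combination (1 - j * 2 ^ (n + 1) + 4 * j) * h2n
    · rw [mul_add, mul_one, pow_add, hpow, pow_two, mk_mul_mk, mk_mul_mk, hw, hu]
      congr 2
      push_cast
      linear_combination (-2 * j) * h2n

theorem controlledPair (l : ℤ) {n s k : ℕ} (hk : n - s - 1 = k) (hk1 : 1 ≤ k)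
    {u : (ZMod (2 ^ (n + k)))ˣ} (hu : (u : ZMod (2 ^ (n + k))) = 2 ^ n - 1) :
    BS.ControlledPair l (-l) 2 n s
      (SemidirectProduct.inl (ofAdd (2 ^ k)) : AffineZMod (2 ^ (n + k))) ⟨ofAdd 1, u⟩ where
  rel := by
    simp only [inl_ofAdd_zpow, mk_mul_mk, hu, one_mul, mul_one]
    congr 2
    push_cast
    linear_combination l * ZMod.two_pow_eq_zero (M := n + k) le_rfl
  orderOf_fst := by
    rw [orderOf_injective _ SemidirectProduct.inl_injective, orderOf_ofAdd_eq_addOrderOf]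
    simpa using ZMod.addOrderOf_cast_pow (p := 2) two_pos (Nat.le_add_left k n)
  pow_fst_eq_pow_snd := by
    have h0 : (2 : ZMod (2 ^ (n + k))) ^ (n + k) = 0 := ZMod.two_pow_eq_zero le_rfl
    obtain ⟨w, hw, hpow⟩ := exists_pow_two_mul hu (ZMod.two_pow_eq_zero (by omega)) (2 ^ (k - 1))
    have hw1 : w = 1 := by
      ext
      rw [hw, Units.val_one]
      push_cast
      rw [← pow_add, show k - 1 + (n + 1) = n + k by omega, h0, sub_zero]
    rw [hk, inl_ofAdd_pow, show 2 ^ k = 2 * 2 ^ (k - 1) by rw [← pow_succ', Nat.sub_add_cancel hk1],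
      hpow, hw1]
    congr 2
    push_cast
    rw [← pow_add, ← pow_add]
    congr 1
    omega

theorem exists_controlledPair (l : ℤ) {n s : ℕ} (hn : s + 2 ≤ n) :
    ∃ α β : AffineZMod (2 ^ (2 * n - s - 1)), BS.ControlledPair l (-l) 2 n s α β := by
  obtain ⟨k, hk, hM⟩ : ∃ k, n - s - 1 = k ∧ 2 * n - s - 1 = n + k := ⟨n - s - 1, rfl, by omega⟩
  rw [hM]
  have h2n : (2 : ZMod (2 ^ (n + k))) ^ (2 * n) = 0 := ZMod.two_pow_eq_zero (by omega)
  let u : (ZMod (2 ^ (n + k)))ˣ :=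
    ⟨2 ^ n - 1, -(2 ^ n + 1), by linear_combination -h2n, by linear_combination -h2n⟩
  exact ⟨_, _, controlledPair l hk (by omega) (u := u) rfl⟩

end AffineZMod

/-- **Lemma 3.2.** Let `G = ⟨a, b; b⁻¹a^{pʳ}b = a^{ε·pʳ}⟩` with `ε = ±1` (and `p = 2`,
`s ≤ r` if `ε = -1`). Then for every `n > s` there is a normal subgroup `N` of `G` of finite
`p`-power index with `A ∩ N = A^{pⁿ}`, `B ∩ N = B^{p^{n-s}}`, and
`a^{p^{n-1}} ≡ b^{p^{n-s-1}} (mod N)`, where `A = ⟨a⟩` and `B = ⟨b⟩`. -/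
theorem bs_exists_normal_subgroup_controlled
    (p : ℕ) (hp : p.Prime) (r s : ℕ) (ε : ℤ) (hε : ε = 1 ∨ ε = -1)
    (hp2 : ε = -1 → p = 2 ∧ s ≤ r)
    (l m : ℤ) (hl : l = (p : ℤ) ^ r) (hm : m = ε * (p : ℤ) ^ r)
    (n : ℕ) (hn : s < n) :
    ∃ N : Subgroup (BS l m), N.Normal ∧ (∃ k : ℕ, N.index = p ^ k) ∧
      Subgroup.zpowers (BS.a l m) ⊓ N = Subgroup.zpowers (BS.a l m ^ p ^ n) ∧
      Subgroup.zpowers (BS.b l m) ⊓ N = Subgroup.zpowers (BS.b l m ^ p ^ (n - s)) ∧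
      BS.a l m ^ p ^ (n - 1) * (BS.b l m ^ p ^ (n - s - 1))⁻¹ ∈ N := by
  subst hl hm
  rcases hε with rfl | rfl
  · obtain ⟨α, β, h⟩ := BS.exists_controlledPair_cyclic (l := p ^ r) (m := 1 * p ^ r) hn (by simp)
    exact h.exists_normal hp hn (Nat.card_multiplicative_zmod _)
  obtain ⟨rfl, hsr⟩ := hp2 rfl
  rw [neg_one_mul, Nat.cast_ofNat]
  rcases Nat.lt_or_ge (s + 1) n with hn2 | hn1
  · obtain ⟨α, β, h⟩ := AffineZMod.exists_controlledPair _ hn2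
    exact h.exists_normal hp hn (AffineZMod.card_two_pow (by omega))
  · obtain ⟨α, β, h⟩ := BS.exists_controlledPair_cyclic (l := 2 ^ r) (m := -2 ^ r) hn
      ((pow_dvd_pow 2 (by omega : n ≤ r + 1)).trans (dvd_of_eq (by ring)))
    exact h.exists_normal hp hn (Nat.card_multiplicative_zmod _)
end

section
/- Let p be a prime, let A be an infinite cyclic group with generator a, let l and m be integers with |m| = l > 0, and let φ : Aˡ → Aᵐ be the isomorphism sending aˡ to aᵐ. Then the family 𝓕_A^p(Aˡ, Aᵐ, φ) of all (Aˡ,Aᵐ,φ,p)-compatible subgroups of A is an (Aˡ,Aᵐ)-filtration if and only if l = p^r for some integer r ≥ 0 and, in the case m = −l, additionally p = 2. -/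
/-! Every subgroup of `A = ⟨a⟩` is normal and, since `φ(x) = x^(±1)`, compatible; a chain
with steps of index `p` forces each `(Aˡ,Aᵐ,φ,p)`-compatible subgroup to be some `⟨a^(pⁿ)⟩`.
As `Aˡ ⊔ ⟨a^(pⁿ)⟩ = ⟨a^gcd(l, pⁿ)⟩` contains `a` raised to the `p`-part of `l`, the
`Aˡ`-filtration property forces `l` to be a power of `p`. For `m = -l` the congruence
`φ(x) ≡ x` down a chain asks `pⁱ⁺¹ ∣ 2l` whenever `pⁱ ∣ l`: for odd `p` this confines the
family to `pⁿ ∣ l`, so `aˡ` lies in all its members; for `p = 2` (or `m = l`) every `⟨a^(pⁿ)⟩`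
belongs to it, so its intersection is trivial and it contains `Aˡ = Aᵐ`. -/

open Subgroup

theorem Nat.gcd_prime_pow_dvd_ordProj {p L : ℕ} (hp : p.Prime) (hL : L ≠ 0) (n : ℕ) :
    L.gcd (p ^ n) ∣ ordProj[p] L := by
  have hcop : (ordCompl[p] L).Coprime (p ^ n) := ((Nat.coprime_ordCompl hp hL).pow_left n).symm
  calc L.gcd (p ^ n) = (ordCompl[p] L * ordProj[p] L).gcd (p ^ n) := by
        rw [mul_comm, Nat.ordProj_mul_ordCompl_eq_self]
    _ = (ordProj[p] L).gcd (p ^ n) := hcop.gcd_mul_left_cancel _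
    _ ∣ ordProj[p] L := Nat.gcd_dvd_left _ _

theorem Int.eq_zero_of_forall_pow_dvd {p : ℕ} (hp : 1 < p) {j : ℤ}
    (h : ∀ n : ℕ, (p : ℤ) ^ n ∣ j) : j = 0 :=
  Int.eq_zero_of_dvd_of_natAbs_lt_natAbs (h j.natAbs) (by simpa using Nat.lt_pow_self hp)

theorem biInf_sup_eq_left {α : Type*} [CompleteLattice α] {s : Set α} {a b : α}
    (hb : b ∈ s) (hba : b ≤ a) : ⨅ x ∈ s, a ⊔ x = a :=
  le_antisymm ((iInf₂_le b hb).trans (sup_le le_rfl hba)) (le_iInf₂ fun _ _ => le_sup_left)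

theorem exists_zpow_eq_and_apply_eq {G K : Type*} [Group G] [Group K] {g : G}
    (f : zpowers g →* K) (x : zpowers g) :
    ∃ t : ℤ, (x : G) = g ^ t ∧ f x = f ⟨g, mem_zpowers g⟩ ^ t := by
  obtain ⟨t, ht⟩ := mem_zpowers_iff.mp x.2
  refine ⟨t, ht.symm, ?_⟩
  rw [← map_zpow]
  congr 1
  exact Subtype.ext ht.symm

theorem compatible_of_zpowers_apply_eq {G : Type*} [Group G] {A B : Subgroup G} {φ : A ≃* B}
    (hφ : ∀ x, zpowers (φ x : G) = zpowers (x : G)) (H : Subgroup G) : Compatible φ H := by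
  ext y
  simp only [mem_map, mem_subgroupOf, MulEquiv.toMonoidHom_eq_coe, MonoidHom.coe_coe]
  constructor
  · rintro ⟨x, hx, rfl⟩
    exact zpowers_le.mp ((hφ x).trans_le (zpowers_le.mpr hx))
  · intro hy
    refine ⟨φ.symm y, ?_, φ.apply_symm_apply y⟩
    have := hφ (φ.symm y)
    rw [φ.apply_symm_apply] at this
    exact zpowers_le.mp (this.symm.trans_le (zpowers_le.mpr hy))

namespace Subgroup

section

variable {G : Type*} [Group G]

theorem index_eq_pow_of_chain {p n : ℕ} {Gs : Fin (n + 1) → Subgroup G}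
    (hlast : Gs (Fin.last n) = ⊤) (hmono : Monotone Gs)
    (hstep : ∀ i : Fin n, (Gs i.castSucc).relIndex (Gs i.succ) = p) (i : Fin (n + 1)) :
    (Gs i).index = p ^ (n - i) := by
  induction i using Fin.reverseInduction with
  | last => simp [hlast]
  | cast i ih =>
    rw [← relIndex_mul_index (hmono (Fin.castSucc_le_succ i)), hstep, ih, ← pow_succ']
    congr 1
    simp only [Fin.val_succ, Fin.val_castSucc]
    omega

theorem zpow_mem_zpowers_zpow_of_dvd {a : G} {j k : ℤ} (h : k ∣ j) :
    a ^ j ∈ zpowers (a ^ k) := by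
  obtain ⟨c, rfl⟩ := h
  rw [zpow_mul]
  exact zpow_mem (mem_zpowers _) c

theorem zpowers_zpow_sup_zpowers_zpow (a : G) (j k : ℤ) :
    zpowers (a ^ j) ⊔ zpowers (a ^ k) = zpowers (a ^ (j.gcd k : ℤ)) := by
  apply le_antisymm
  · refine sup_le (zpowers_le.mpr ?_) (zpowers_le.mpr ?_)
    exacts [zpow_mem_zpowers_zpow_of_dvd (Int.gcd_dvd_left j k),
      zpow_mem_zpowers_zpow_of_dvd (Int.gcd_dvd_right j k)]
  · rw [zpowers_le, Int.gcd_eq_gcd_ab, zpow_add, zpow_mul, zpow_mul]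
    exact mul_mem (mem_sup_left (zpow_mem (mem_zpowers _) _))
      (mem_sup_right (zpow_mem (mem_zpowers _) _))

end

section InfiniteCyclic

variable {A : Type*} [Group A] {a : A}

theorem zpow_mem_zpowers_zpow_iff (hinf : ¬IsOfFinOrder a) {j k : ℤ} :
    a ^ j ∈ zpowers (a ^ k) ↔ k ∣ j := by
  refine ⟨fun h => ?_, zpow_mem_zpowers_zpow_of_dvd⟩
  obtain ⟨t, ht⟩ := mem_zpowers_iff.mp h
  rw [← zpow_mul] at ht
  exact ⟨t, (injective_zpow_iff_not_isOfFinOrder.mpr hinf ht).symm⟩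

theorem index_zpowers_zpow (hgen : zpowers a = ⊤) (hinf : ¬IsOfFinOrder a) (k : ℤ) :
    (zpowers (a ^ k)).index = k.natAbs := by
  have hsurj : Function.Surjective (zpowersHom A a) := by
    rw [← MonoidHom.range_eq_top, range_zpowersHom, hgen]
  have hcomap : (zpowers (a ^ k)).comap (zpowersHom A a) =
      (AddSubgroup.zmultiples k).toSubgroup := by
    ext n
    simp [zpow_mem_zpowers_zpow_iff hinf, Int.mem_zmultiples_iff]
  rw [← index_comap_of_surjective _ hsurj, hcomap, AddSubgroup.index_toSubgroup,
    Int.index_zmultiples]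

theorem eq_zpowers_zpow_index (hgen : zpowers a = ⊤) (hinf : ¬IsOfFinOrder a)
    (H : Subgroup A) : H = zpowers (a ^ (H.index : ℤ)) := by
  obtain ⟨k, rfl⟩ := (le_zpowers_iff a H).mp (hgen ▸ le_top)
  rw [← zpow_natCast, index_zpowers_zpow hgen hinf, Int.natAbs_natCast]

theorem relIndex_zpowers_zpow_mul (hgen : zpowers a = ⊤) (hinf : ¬IsOfFinOrder a) {k : ℤ}
    (hk : k ≠ 0) (d : ℤ) : (zpowers (a ^ (k * d))).relIndex (zpowers (a ^ k)) = d.natAbs := by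
  have h := relIndex_mul_index
    (zpowers_le.mpr (zpow_mem_zpowers_zpow_of_dvd (a := a) (dvd_mul_right k d)))
  rw [index_zpowers_zpow hgen hinf, index_zpowers_zpow hgen hinf, Int.natAbs_mul,
    mul_comm k.natAbs] at h
  exact Nat.eq_of_mul_eq_mul_right (Int.natAbs_pos.mpr hk) h

theorem normal_of_zpowers_eq_top (hgen : zpowers a = ⊤) (H : Subgroup A) : H.Normal := by
  have : IsCyclic A := isCyclic_iff_exists_zpowers_eq_top.mpr ⟨a, hgen⟩
  infer_instance

theorem eq_zpowers_pow_of_chain (hgen : zpowers a = ⊤) (hinf : ¬IsOfFinOrder a) {p n : ℕ}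
    {Gs : Fin (n + 1) → Subgroup A} (hlast : Gs (Fin.last n) = ⊤) (hmono : Monotone Gs)
    (hstep : ∀ i : Fin n, (Gs i.castSucc).relIndex (Gs i.succ) = p) (i : Fin (n + 1)) :
    Gs i = zpowers (a ^ ((p : ℤ) ^ (n - i : ℕ))) := by
  rw [eq_zpowers_zpow_index hgen hinf (Gs i), index_eq_pow_of_chain hlast hmono hstep i]
  push_cast
  rfl

theorem eq_one_of_forall_mem_zpowers_pow (hgen : zpowers a = ⊤) (hinf : ¬IsOfFinOrder a)
    {p : ℕ} (hp : 1 < p) {x : A} (hx : ∀ n : ℕ, x ∈ zpowers (a ^ ((p : ℤ) ^ n))) :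
    x = 1 := by
  obtain ⟨j, rfl⟩ := mem_zpowers_iff.mp (hgen ▸ mem_top x)
  rw [Int.eq_zero_of_forall_pow_dvd hp fun n => (zpow_mem_zpowers_zpow_iff hinf).mp (hx n),
    zpow_zero]

end InfiniteCyclic

end Subgroup

section CompatibleSubgroups

variable {A : Type*} [Group A] {a : A} {p : ℕ} {l m : ℤ}
  {φ : zpowers (a ^ l) ≃* zpowers (a ^ m)}

theorem coe_apply_eq_zpow (hφ : (φ ⟨a ^ l, mem_zpowers _⟩ : A) = a ^ m) {e : ℤ}
    (he : m = l * e) (x : zpowers (a ^ l)) : (φ x : A) = (x : A) ^ e := by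
  obtain ⟨t, hx, hφx⟩ := exists_zpow_eq_and_apply_eq φ.toMonoidHom x
  rw [show φ x = _ from hφx, coe_zpow, MulEquiv.coe_toMonoidHom, hφ, hx, he, ← zpow_mul,
    ← zpow_mul, ← zpow_mul]
  ring_nf

theorem compatible_of_eq_or_eq_neg (hφ : (φ ⟨a ^ l, mem_zpowers _⟩ : A) = a ^ m)
    (hml : m = l ∨ m = -l) (H : Subgroup A) : Compatible φ H := by
  refine compatible_of_zpowers_apply_eq (fun x => ?_) H
  rcases hml with hm | hm
  · rw [coe_apply_eq_zpow hφ (e := 1) (by rw [hm, mul_one]), zpow_one]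
  · rw [coe_apply_eq_zpow hφ (e := -1) (by rw [hm, mul_neg_one]), zpow_neg_one, zpowers_inv]

theorem PCompatible.exists_eq_zpowers (hp : p.Prime) (hgen : zpowers a = ⊤)
    (hinf : ¬IsOfFinOrder a) (hφ : (φ ⟨a ^ l, mem_zpowers _⟩ : A) = a ^ m) {H : Subgroup A}
    (h : PCompatible p φ H) :
    ∃ n : ℕ, H = zpowers (a ^ ((p : ℤ) ^ n)) ∧
      (m = -l → p ≠ 2 → (p : ℤ) ^ n ∣ l) := by
  obtain ⟨n, Gs, h0, hlast, hmono, -, hstep⟩ := h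
  have hGs := eq_zpowers_pow_of_chain hgen hinf hlast hmono fun i => (hstep i).1
  refine ⟨n, by rw [← h0, hGs]; rfl, fun hm hp2 => ?_⟩
  have hcop : IsCoprime (p : ℤ) 2 :=
    Nat.isCoprime_iff_coprime.mpr ((Nat.coprime_primes hp Nat.prime_two).mpr hp2)
  suffices ∀ k ≤ n, (p : ℤ) ^ k ∣ l from this n le_rfl
  intro k hk
  induction k with
  | zero => simp
  | succ k ih =>
    -- `φ(aˡ) aˡ⁻¹ = a⁻²ˡ` must drop one step down the chain, and `p` is odd.
    let i : Fin n := ⟨n - (k + 1), by omega⟩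
    have hmem : a ^ l ∈ Gs i.succ := by
      rw [hGs, show n - (i.succ : ℕ) = k by simp [i]; omega]
      exact zpow_mem_zpowers_zpow_of_dvd (ih (by omega))
    have hdrop := (hstep i).2 ⟨a ^ l, mem_zpowers _⟩ hmem
    rw [hφ, hm, hGs, show n - (i.castSucc : ℕ) = k + 1 by simp [i]; omega, ← zpow_neg,
      ← zpow_add, zpow_mem_zpowers_zpow_iff hinf] at hdrop
    refine (hcop.pow_left (m := k + 1)).dvd_of_dvd_mul_left ?_
    rwa [← dvd_neg, show -(2 * l) = -l + -l by ring]

theorem zpow_ordProj_mem_sup_of_pCompatible (hp : p.Prime) (hgen : zpowers a = ⊤)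
    (hinf : ¬IsOfFinOrder a) (hφ : (φ ⟨a ^ l, mem_zpowers _⟩ : A) = a ^ m) (hl : l ≠ 0)
    {N : Subgroup A} (hN : PCompatible p φ N) :
    a ^ (ordProj[p] l.natAbs : ℤ) ∈ zpowers (a ^ l) ⊔ N := by
  obtain ⟨n, rfl, -⟩ := hN.exists_eq_zpowers hp hgen hinf hφ
  rw [zpowers_zpow_sup_zpowers_zpow]
  refine zpow_mem_zpowers_zpow_of_dvd (Int.natCast_dvd_natCast.mpr ?_)
  simpa [Int.gcd] using Nat.gcd_prime_pow_dvd_ordProj hp (Int.natAbs_ne_zero.mpr hl) n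

theorem zpow_mem_of_pCompatible_of_odd (hp : p.Prime) (hgen : zpowers a = ⊤)
    (hinf : ¬IsOfFinOrder a) (hφ : (φ ⟨a ^ l, mem_zpowers _⟩ : A) = a ^ m) (hm : m = -l)
    (hp2 : p ≠ 2) {N : Subgroup A} (hN : PCompatible p φ N) : a ^ l ∈ N := by
  obtain ⟨n, rfl, hdvd⟩ := hN.exists_eq_zpowers hp hgen hinf hφ
  exact zpow_mem_zpowers_zpow_of_dvd (hdvd hm hp2)

theorem pCompatible_zpowers_pow (hp : p ≠ 0) (hgen : zpowers a = ⊤) (hinf : ¬IsOfFinOrder a)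
    (hφ : (φ ⟨a ^ l, mem_zpowers _⟩ : A) = a ^ m) (hml : m = l ∨ m = -l ∧ p = 2)
    (n : ℕ) : PCompatible p φ (zpowers (a ^ ((p : ℤ) ^ n))) := by
  have hcompat := compatible_of_eq_or_eq_neg hφ (hml.imp_right And.left)
  refine ⟨n, fun i => zpowers (a ^ ((p : ℤ) ^ (n - i : ℕ))), by simp, by simp [hgen],
    fun i j hij => ?_, fun i => ⟨normal_of_zpowers_eq_top hgen _, hcompat _⟩,
    fun i => ⟨?_, fun x hx => ?_⟩⟩
  · exact zpowers_le.mpr (zpow_mem_zpowers_zpow_of_dvd (pow_dvd_pow _ (by omega)))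
  all_goals
    simp only
    rw [show n - (i.castSucc : ℕ) = n - (i.succ : ℕ) + 1 by simp; omega, pow_succ]
  · rw [relIndex_zpowers_zpow_mul hgen hinf (pow_ne_zero _ (by exact_mod_cast hp)),
      Int.natAbs_natCast]
  · rcases hml with hm | ⟨hm, rfl⟩
    · rw [coe_apply_eq_zpow hφ (e := 1) (by rw [hm, mul_one]), zpow_one, mul_inv_cancel]
      exact one_mem _
    · rw [coe_apply_eq_zpow hφ (e := -1) (by rw [hm, mul_neg_one])]
      obtain ⟨t, ht⟩ := mem_zpowers_iff.mp hx
      rw [← ht]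
      simp only [← zpow_mul, ← zpow_neg, ← zpow_add]
      exact zpow_mem_zpowers_zpow_of_dvd ⟨-t, by ring⟩

end CompatibleSubgroups

/-- Let `A = ⟨a⟩` be infinite cyclic, `|m| = l > 0`, and `φ : Aˡ ≃* Aᵐ` the isomorphism with
`φ(aˡ) = aᵐ`. Then the family `𝓕_A^p(Aˡ, Aᵐ, φ)` of all `(Aˡ,Aᵐ,φ,p)`-compatible subgroups
of `A` is an `(Aˡ,Aᵐ)`-filtration iff `l = p^r` for some `r ≥ 0` and moreover `p = 2`
whenever `m = -l`. -/
theorem infinite_cyclic_pCompatible_family_filtration_iff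
    (p : ℕ) (hp : p.Prime) (A : Type*) [Group A] (a : A)
    (hgen : Subgroup.zpowers a = ⊤) (hinf : ¬ IsOfFinOrder a)
    (l m : ℤ) (hl : 0 < l) (hml : |m| = l)
    (φ : Subgroup.zpowers (a ^ l) ≃* Subgroup.zpowers (a ^ m))
    (hφ : (φ ⟨a ^ l, Subgroup.mem_zpowers _⟩ : A) = a ^ m) :
    (sInf {H : Subgroup A | PCompatible p φ H} = ⊥ ∧
     (⨅ N ∈ {H : Subgroup A | PCompatible p φ H}, Subgroup.zpowers (a ^ l) ⊔ N) =
        Subgroup.zpowers (a ^ l) ∧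
     (⨅ N ∈ {H : Subgroup A | PCompatible p φ H}, Subgroup.zpowers (a ^ m) ⊔ N) =
        Subgroup.zpowers (a ^ m)) ↔
      ((∃ r : ℕ, l = (p : ℤ) ^ r) ∧ (m = -l → p = 2)) := by
  constructor
  · rintro ⟨hbot, hfilt, -⟩
    have hq : a ^ (ordProj[p] l.natAbs : ℤ) ∈ zpowers (a ^ l) := by
      rw [← hfilt]
      exact mem_iInf.mpr fun N => mem_iInf.mpr fun hN =>
        zpow_ordProj_mem_sup_of_pCompatible hp hgen hinf hφ hl.ne' hN
    have hlq : l = (ordProj[p] l.natAbs : ℕ) := Int.dvd_antisymm hl.le (Nat.cast_nonneg _)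
      ((zpow_mem_zpowers_zpow_iff hinf).mp hq) (Int.natCast_dvd.mpr (Nat.ordProj_dvd _ _))
    refine ⟨⟨_, hlq.trans (Nat.cast_pow _ _)⟩, fun hm => ?_⟩
    by_contra hp2
    have hal : a ^ l ∈ sInf {H : Subgroup A | PCompatible p φ H} :=
      mem_sInf.mpr fun N hN => zpow_mem_of_pCompatible_of_odd hp hgen hinf hφ hm hp2 hN
    rw [hbot, mem_bot, ← zpow_zero a] at hal
    exact hl.ne' (injective_zpow_iff_not_isOfFinOrder.mpr hinf hal)
  · rintro ⟨⟨r, rfl⟩, hm2⟩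
    have hml' : m = (p : ℤ) ^ r ∨ m = -(p : ℤ) ^ r := (abs_eq hl.le).mp hml
    have hmem (n : ℕ) : zpowers (a ^ ((p : ℤ) ^ n)) ∈ {H : Subgroup A | PCompatible p φ H} :=
      pCompatible_zpowers_pow hp.ne_zero hgen hinf hφ (hml'.imp_right fun hm => ⟨hm, hm2 hm⟩) n
    have hAm : zpowers (a ^ m) = zpowers (a ^ (p : ℤ) ^ r) := by
      rcases hml' with hm | hm <;> simp [hm, zpow_neg]
    refine ⟨eq_bot_iff.mpr fun x hx => ?_, biInf_sup_eq_left (hmem r) le_rfl,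
      biInf_sup_eq_left (hmem r) hAm.ge⟩
    exact mem_bot.mpr (eq_one_of_forall_mem_zpowers_pow hgen hinf hp.one_lt fun n =>
      mem_sInf.mp hx _ (hmem n))
end
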